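/- Error bound for a single reconstructed Fourier coefficient: let x(t) = S_t x₀ + ∫₀^t S_{t−s} f(s) ds, y(t) = C x(t), ξ(t) = ∫₀^t C S_{t−s} f(s) ds, and let y^δ ∈ L²(0,t_f;Y) be noisy data with ‖y^δ(t) − y(t)‖_Y ≤ δ for a.e. t. Suppose u ∈ L²(0, t_f; Y) and φ ∈ X satisfy ‖𝓛u − φ‖_X ≤ ε, where 𝓛u := ∫₀^{t_f} S_s^* C^* u(s) ds. Then the approximate coefficient α^δ := ∫₀^{t_f} ⟨u(t), y^δ(t) − ξ(t)⟩_Y dt satisfies |⟨x₀, φ⟩_X − α^δ| ≤ ε ‖x₀‖_X + δ √(t_f) ‖u‖_{L²(0,t_f;Y)}. -/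

import Mathlib

/-!
Since `y - ξ = C S_t x₀` on `[0, t_f]`, duality `⟪u(t), C S_t x₀⟫ = ⟪x₀, S_t^* C^* u(t)⟫` turns the
approximate coefficient into `α^δ = ∫ ⟪u, y^δ - y⟫ + ⟪x₀, 𝓛u⟫`. Hence
`⟪x₀, φ⟫ - α^δ = ⟪x₀, φ - 𝓛u⟫ - ∫ ⟪u, y^δ - y⟫`: the first term is at most `ε ‖x₀‖` by
Cauchy–Schwarz in `X`, the second at most `δ ‖u‖_{L¹} ≤ δ √t_f ‖u‖_{L²}`.

The analytic work is making these Bochner integrals meaningful. The adjoint orbits `t ↦ S_t^* v`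
are only weakly continuous, so the measurability of `t ↦ S_t^* C^* u(t)` is a Pettis-type
argument: a weakly continuous map has separable range, and a weakly measurable map with separable
range is strongly measurable.
-/

open MeasureTheory Set Filter Topology TopologicalSpace
open scoped RealInnerProductSpace

section Continuity

variable {𝕜 α E F : Type*} [NontriviallyNormedField 𝕜] [TopologicalSpace α]
  [NormedAddCommGroup E] [NormedSpace 𝕜 E] [NormedAddCommGroup F] [NormedSpace 𝕜 F]

theorem continuousOn_clm_apply_prod_univ {T : α → E →L[𝕜] F} {K : Set α} {M : ℝ}
    (hT : ∀ x, ContinuousOn (fun a => T a x) K) (hM : ∀ a ∈ K, ‖T a‖ ≤ M) :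
    ContinuousOn (fun p : α × E => T p.1 p.2) (K ×ˢ univ) :=
  continuousOn_prod_of_continuousOn_lipschitzOnWith' (fun p : α × E => T p.1 p.2) M.toNNReal
    (fun a ha => (ContinuousLinearMap.lipschitzWith_of_opNorm_le
      ((hM a ha).trans (Real.le_coe_toNNReal M))).lipschitzOnWith)
    (fun x _ => hT x)

theorem continuousOn_convolution_integrand {S : ℝ → E →L[𝕜] F} {f : ℝ → E} {T M : ℝ}
    (hS : ∀ x, ContinuousOn (fun t => S t x) (Icc 0 T)) (hM : ∀ t ∈ Icc 0 T, ‖S t‖ ≤ M)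
    (hf : ContinuousOn f (Icc 0 T)) :
    ContinuousOn (fun p : ℝ × ℝ => S (p.1 - p.2) (f p.2))
      {p | 0 ≤ p.2 ∧ p.2 ≤ p.1 ∧ p.1 ≤ T} := by
  refine (continuousOn_clm_apply_prod_univ hS hM).comp
    ((continuous_fst.sub continuous_snd).continuousOn.prodMk
      (hf.comp continuous_snd.continuousOn fun p hp => ⟨hp.1, hp.2.1.trans hp.2.2⟩)) ?_
  rintro p ⟨h0, hst, hT⟩
  exact ⟨⟨sub_nonneg.2 hst, (sub_le_self _ h0).trans hT⟩, mem_univ _⟩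

end Continuity

theorem continuousOn_intervalIntegral_of_continuousOn_triangle {E : Type*}
    [NormedAddCommGroup E] [NormedSpace ℝ E] {g : ℝ → ℝ → E} {T : ℝ}
    (hg : ContinuousOn (Function.uncurry g) {p | 0 ≤ p.2 ∧ p.2 ≤ p.1 ∧ p.1 ≤ T}) :
    ContinuousOn (fun t => ∫ s in 0..t, g t s) (Icc 0 T) := by
  intro t₀ ht₀
  have hT : 0 ≤ T := ht₀.1.trans ht₀.2
  -- `(t, s) ↦ (c T t, c (c T t) s)` is a continuous retraction of the plane onto the triangle
  set c : ℝ → ℝ → ℝ := fun b x => max 0 (min x b)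
  have hc : ∀ {b x}, 0 ≤ b → c b x ∈ Icc 0 b :=
    fun hb => ⟨le_max_left _ _, max_le hb (min_le_right _ _)⟩
  have hc_eq : ∀ {b x}, x ∈ Icc 0 b → c b x = x := fun hx => by
    simp only [c, min_eq_left hx.2, max_eq_right hx.1]
  have hG : Continuous fun p : ℝ × ℝ => g (c T p.1) (c (c T p.1) p.2) := by
    refine hg.comp_continuous (f := fun p : ℝ × ℝ => (c T p.1, c (c T p.1) p.2))
      (by simp only [c]; fun_prop) fun p => ?_
    obtain ⟨h0, h1⟩ := hc (x := p.1) hT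
    obtain ⟨h2, h3⟩ := hc (b := c T p.1) (x := p.2) h0
    exact ⟨h2, h3, h1⟩
  refine ((intervalIntegral.continuous_parametric_intervalIntegral_of_continuous (μ := volume)
    (a₀ := 0) (f := fun t s => g (c T t) (c (c T t) s)) hG continuous_id).continuousOn.congr
    (fun t ht => ?_)) t₀ ht₀
  refine intervalIntegral.integral_congr fun s hs => ?_
  rw [uIcc_of_le ht.1] at hs
  simp only [hc_eq ht, hc_eq hs]

section WeakMeasurability

variable {𝕜 α E : Type*} [RCLike 𝕜] [NormedAddCommGroup E] [InnerProductSpace 𝕜 E]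
  [CompleteSpace E]

theorem aestronglyMeasurable_of_forall_inner [MeasurableSpace α] {μ : Measure α} {h : α → E}
    {K : Set E} (hK : IsSeparable K) (hhK : ∀ᵐ a ∂μ, h a ∈ K)
    (hweak : ∀ z : E, AEStronglyMeasurable (fun a => inner 𝕜 z (h a)) μ) :
    AEStronglyMeasurable h μ := by
  obtain ⟨c, hc, hKc⟩ := hK
  obtain ⟨e, he⟩ := (hc.insert 0).exists_eq_range (insert_nonempty _ _)
  set U : ℕ → Submodule 𝕜 E := fun n => Submodule.span 𝕜 (e '' Iic n)
  have (n : ℕ) : FiniteDimensional 𝕜 (U n) :=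
    FiniteDimensional.span_of_finite 𝕜 ((finite_Iic n).image e)
  have hU : Monotone U := fun m n hmn => Submodule.span_mono (image_mono (Iic_subset_Iic.2 hmn))
  have hKU : K ⊆ (⨆ n, U n).topologicalClosure := by
    refine hKc.trans ((closure_mono ?_).trans (Submodule.topologicalClosure_coe _).ge)
    rintro _ hx
    obtain ⟨n, rfl⟩ : _ ∈ range e := he ▸ mem_insert_of_mem _ hx
    exact Submodule.mem_iSup_of_mem n (Submodule.subset_span (mem_image_of_mem e self_mem_Iic))
  refine aestronglyMeasurable_of_tendsto_ae atTop
    (f := fun n a => (U n).starProjection (h a)) (fun n => ?_) ?_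
  · let b := stdOrthonormalBasis 𝕜 (U n)
    simp_rw [Submodule.starProjection_apply, b.orthogonalProjectionOnto_apply_eq_sum]
    push_cast
    exact Finset.aestronglyMeasurable_fun_sum _ fun i _ => (hweak (b i)).smul_const _
  · filter_upwards [hhK] with a ha
    simpa only [Submodule.starProjection_eq_self_iff.2 (hKU ha)] using
      Submodule.starProjection_tendsto_closure_iSup U hU (h a)

variable [TopologicalSpace α] [PseudoMetrizableSpace α]

theorem isSeparable_image_of_continuousOn_inner {K : Set α} (hK : IsSeparable K) {h : α → E}
    (hweak : ∀ z : E, ContinuousOn (fun a => inner 𝕜 z (h a)) K) :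
    IsSeparable (h '' K) := by
  obtain ⟨D, hDK, hDc, hKD⟩ := hK.exists_countable_dense_subset
  -- a vector orthogonal to `h '' D` is orthogonal to `h '' K` by weak continuity, so `h '' K` lies
  -- in the closed span of `h '' D`
  refine ((hDc.image h).isSeparable.span (R := 𝕜)).closure.mono ?_
  rintro _ ⟨a, ha, rfl⟩
  rw [← Submodule.topologicalClosure_coe, ← Submodule.orthogonal_orthogonal_eq_closure,
    SetLike.mem_coe, Submodule.mem_orthogonal]
  intro z hz
  have hzD : EqOn (fun a => inner 𝕜 z (h a)) 0 D := fun d hd =>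
    Submodule.inner_left_of_mem_orthogonal (Submodule.subset_span (mem_image_of_mem h hd)) hz
  exact hzD.of_subset_closure (hweak z) continuousOn_const hDK hKD ha

theorem aestronglyMeasurable_of_continuousOn_inner [MeasurableSpace α] [OpensMeasurableSpace α]
    {μ : Measure α} {K : Set α} (hKm : MeasurableSet K) (hK : IsSeparable K) {h : α → E}
    (hweak : ∀ z : E, ContinuousOn (fun a => inner 𝕜 z (h a)) K) :
    AEStronglyMeasurable h (μ.restrict K) :=
  aestronglyMeasurable_of_forall_inner (isSeparable_image_of_continuousOn_inner hK hweak)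
    ((ae_restrict_mem hKm).mono fun _ ha => mem_image_of_mem h ha)
    fun z => (hweak z).aestronglyMeasurable hKm

end WeakMeasurability

theorem aestronglyMeasurable_clm_apply_of_forall {𝕜 α E F : Type*} [NontriviallyNormedField 𝕜]
    [NormedAddCommGroup E] [NormedSpace 𝕜 E] [NormedAddCommGroup F] [NormedSpace 𝕜 F]
    [MeasurableSpace α] {μ : Measure α} {T : α → E →L[𝕜] F}
    (hT : ∀ v, AEStronglyMeasurable (fun a => T a v) μ) {u : α → E}
    (hu : AEStronglyMeasurable u μ) :
    AEStronglyMeasurable (fun a => T a (u a)) μ := by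
  have hsimple (ψ : SimpleFunc α E) : AEStronglyMeasurable (fun a => T a (ψ a)) μ := by
    induction ψ using SimpleFunc.induction with
    | @const v s hs =>
      convert (hT v).indicator hs using 1
      ext a
      by_cases ha : a ∈ s <;> simp [ha]
    | @add ψ ψ' _ hψ hψ' =>
      simpa only [SimpleFunc.coe_add, Pi.add_apply, map_add] using hψ.fun_add hψ'
  have hum := hu.stronglyMeasurable_mk
  refine (aestronglyMeasurable_of_tendsto_ae atTop (fun n => hsimple (hum.approx n))
    (ae_of_all _ fun a => ((T a).continuous.tendsto _).comp (hum.tendsto_approx a))).congr ?_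
  filter_upwards [hu.ae_eq_mk] with a ha
  rw [ha]

theorem integrable_adjoint_apply {𝕜 α E F : Type*} [RCLike 𝕜] [NormedAddCommGroup E]
    [InnerProductSpace 𝕜 E] [CompleteSpace E] [NormedAddCommGroup F] [InnerProductSpace 𝕜 F]
    [CompleteSpace F] [TopologicalSpace α] [PseudoMetrizableSpace α] [MeasurableSpace α]
    [OpensMeasurableSpace α] {μ : Measure α} {K : Set α} (hKm : MeasurableSet K)
    (hK : IsSeparable K) {T : α → E →L[𝕜] F} (hT : ∀ x, ContinuousOn (fun a => T a x) K)
    {M : ℝ} (hM : ∀ a ∈ K, ‖T a‖ ≤ M) {u : α → F} (hu : Integrable u (μ.restrict K)) :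
    Integrable (fun a => ContinuousLinearMap.adjoint (T a) (u a)) (μ.restrict K) := by
  have hmeas :
      AEStronglyMeasurable (fun a => ContinuousLinearMap.adjoint (T a) (u a)) (μ.restrict K) := by
    refine aestronglyMeasurable_clm_apply_of_forall (fun v => ?_) hu.1
    refine aestronglyMeasurable_of_continuousOn_inner (𝕜 := 𝕜) hKm hK fun z => ?_
    simp only [ContinuousLinearMap.adjoint_inner_right]
    exact (hT z).inner continuousOn_const
  refine (hu.norm.const_mul M).mono' hmeas ?_
  filter_upwards [ae_restrict_mem hKm] with a ha
  calc ‖ContinuousLinearMap.adjoint (T a) (u a)‖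
      ≤ ‖ContinuousLinearMap.adjoint (T a)‖ * ‖u a‖ := ContinuousLinearMap.le_opNorm _ _
    _ ≤ M * ‖u a‖ := by
      rw [LinearIsometryEquiv.norm_map]
      exact mul_le_mul_of_nonneg_right (hM a ha) (norm_nonneg _)

section Estimates

variable {α X Y : Type*} [MeasurableSpace α] {μ : Measure α} [IsFiniteMeasure μ]
  [NormedAddCommGroup Y]

theorem integral_norm_le_sqrt_measureReal_mul_sqrt {u : α → Y} (hu : MemLp u 2 μ) :
    ∫ a, ‖u a‖ ∂μ ≤ √(μ.real univ) * √(∫ a, ‖u a‖ ^ 2 ∂μ) := by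
  have h := integral_mul_le_Lp_mul_Lq_of_nonneg Real.HolderConjugate.two_two
    (ae_of_all μ fun _ => zero_le_one) (ae_of_all μ fun a => norm_nonneg (u a))
    (by simpa using memLp_const (μ := μ) (p := 2) (1 : ℝ)) (by simpa using hu.norm)
  simpa [Real.sqrt_eq_rpow] using h

variable [InnerProductSpace ℝ Y]

theorem abs_integral_inner_le_of_norm_le {u w : α → Y} {δ : ℝ} (hu : MemLp u 2 μ) (hδ : 0 ≤ δ)
    (hw : ∀ᵐ a ∂μ, ‖w a‖ ≤ δ) :
    |∫ a, ⟪u a, w a⟫ ∂μ| ≤ δ * √(μ.real univ) * √(∫ a, ‖u a‖ ^ 2 ∂μ) := by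
  calc |∫ a, ⟪u a, w a⟫ ∂μ| ≤ ∫ a, |⟪u a, w a⟫| ∂μ := abs_integral_le_integral_abs
    _ ≤ ∫ a, δ * ‖u a‖ ∂μ := by
      refine integral_mono_of_nonneg (ae_of_all _ fun _ => abs_nonneg _)
        ((hu.integrable one_le_two).norm.const_mul δ) ?_
      filter_upwards [hw] with a ha
      calc |⟪u a, w a⟫| ≤ ‖u a‖ * ‖w a‖ := abs_real_inner_le_norm _ _
        _ ≤ δ * ‖u a‖ := by rw [mul_comm]; exact mul_le_mul_of_nonneg_right ha (norm_nonneg _)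
    _ ≤ δ * (√(μ.real univ) * √(∫ a, ‖u a‖ ^ 2 ∂μ)) := by
      rw [integral_const_mul]
      exact mul_le_mul_of_nonneg_left (integral_norm_le_sqrt_measureReal_mul_sqrt hu) hδ
    _ = _ := (mul_assoc _ _ _).symm

variable [NormedAddCommGroup X] [InnerProductSpace ℝ X] [CompleteSpace X] [CompleteSpace Y]

theorem abs_inner_sub_integral_inner_le {T : α → X →L[ℝ] Y} {u w : α → Y} {x₀ φ : X}
    {ε δ : ℝ} (hu : MemLp u 2 μ)
    (hTu : Integrable (fun a => ContinuousLinearMap.adjoint (T a) (u a)) μ)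
    (hw : AEStronglyMeasurable w μ) (hδ : 0 ≤ δ) (hwδ : ∀ᵐ a ∂μ, ‖w a‖ ≤ δ)
    (hφ : ‖∫ a, ContinuousLinearMap.adjoint (T a) (u a) ∂μ - φ‖ ≤ ε) :
    |⟪x₀, φ⟫ - ∫ a, ⟪u a, w a + T a x₀⟫ ∂μ| ≤
      ε * ‖x₀‖ + δ * √(μ.real univ) * √(∫ a, ‖u a‖ ^ 2 ∂μ) := by
  set L := ∫ a, ContinuousLinearMap.adjoint (T a) (u a) ∂μ
  have hduality : (fun a => ⟪u a, T a x₀⟫) =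
      fun a => ⟪x₀, ContinuousLinearMap.adjoint (T a) (u a)⟫ := by
    ext a
    rw [ContinuousLinearMap.adjoint_inner_right, real_inner_comm]
  have huw : Integrable (fun a => ⟪u a, w a⟫) μ := by
    refine ((hu.integrable one_le_two).norm.mul_const δ).mono' (hu.1.inner hw) ?_
    filter_upwards [hwδ] with a ha
    exact (norm_inner_le_norm _ _).trans (mul_le_mul_of_nonneg_left ha (norm_nonneg _))
  have hsplit : ∫ a, ⟪u a, w a + T a x₀⟫ ∂μ = ∫ a, ⟪u a, w a⟫ ∂μ + ⟪x₀, L⟫ := by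
    simp_rw [inner_add_right]
    rw [integral_add huw (hduality ▸ hTu.const_inner x₀), hduality, integral_inner hTu]
  calc |⟪x₀, φ⟫ - ∫ a, ⟪u a, w a + T a x₀⟫ ∂μ|
      = |⟪x₀, φ - L⟫ - ∫ a, ⟪u a, w a⟫ ∂μ| := by rw [hsplit, inner_sub_right]; ring_nf
    _ ≤ |⟪x₀, φ - L⟫| + |∫ a, ⟪u a, w a⟫ ∂μ| := abs_sub _ _
    _ ≤ ε * ‖x₀‖ + δ * √(μ.real univ) * √(∫ a, ‖u a‖ ^ 2 ∂μ) := by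
      gcongr
      · exact (abs_real_inner_le_norm _ _).trans
          (by rw [mul_comm, norm_sub_rev]; exact mul_le_mul_of_nonneg_right hφ (norm_nonneg _))
      · exact abs_integral_inner_le_of_norm_le hu hδ hwδ

end Estimates

theorem single_coefficient_error_bound_general
    {X Y : Type*} [NormedAddCommGroup X] [InnerProductSpace ℝ X] [CompleteSpace X]
    [NormedAddCommGroup Y] [InnerProductSpace ℝ Y] [CompleteSpace Y]
    (t_f : ℝ) (ht_f : 0 < t_f)
    (S : ℝ → X →L[ℝ] X) (M : ℝ)
    (hScont : ∀ x : X, ContinuousOn (fun t => S t x) (Set.Icc 0 t_f))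
    (hSbound : ∀ t ∈ Set.Icc 0 t_f, ‖S t‖ ≤ M)
    (C : X →L[ℝ] Y)
    (f : ℝ → X) (hf : ContinuousOn f (Set.Icc 0 t_f))
    (x₀ : X)
    (x : ℝ → X) (hx : ∀ t, x t = S t x₀ + ∫ s in (0:ℝ)..t, S (t - s) (f s))
    (y : ℝ → Y) (hy : ∀ t, y t = C (x t))
    (ξ : ℝ → Y) (hξ : ∀ t, ξ t = ∫ s in (0:ℝ)..t, C (S (t - s) (f s)))
    (δ : ℝ) (hδ : 0 ≤ δ)
    (yδ : ℝ → Y) (hyδmem : MemLp yδ 2 (volume.restrict (Set.Ioc (0:ℝ) t_f)))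
    (hnoise : ∀ᵐ t ∂(volume.restrict (Set.Ioc (0:ℝ) t_f)), ‖yδ t - y t‖ ≤ δ)
    (u : ℝ → Y) (hu : MemLp u 2 (volume.restrict (Set.Ioc (0:ℝ) t_f)))
    (φ : X) (ε : ℝ)
    (hctrl : ‖(∫ s in Set.Ioc (0:ℝ) t_f,
        (ContinuousLinearMap.adjoint (S s)) ((ContinuousLinearMap.adjoint C) (u s))) - φ‖ ≤ ε) :
    |⟪x₀, φ⟫ - ∫ t in Set.Ioc (0:ℝ) t_f, ⟪u t, yδ t - ξ t⟫| ≤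
      ε * ‖x₀‖ +
        δ * Real.sqrt t_f * Real.sqrt (∫ t in Set.Ioc (0:ℝ) t_f, ‖u t‖ ^ 2) := by
  have hconv := continuousOn_convolution_integrand hScont hSbound hf
  have hξ_cont : ContinuousOn ξ (Icc 0 t_f) := by
    simpa only [← hξ] using continuousOn_intervalIntegral_of_continuousOn_triangle
      (g := fun t s => C (S (t - s) (f s))) (C.continuous.comp_continuousOn hconv)
  have hy_eq : ∀ t ∈ Icc 0 t_f, y t = ξ t + C (S t x₀) := by
    intro t ht
    have hint : IntervalIntegrable (fun s => S (t - s) (f s)) volume 0 t :=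
      (hconv.comp (continuousOn_const.prodMk continuousOn_id)
        fun s hs => ⟨hs.1, hs.2, ht.2⟩).intervalIntegrable_of_Icc ht.1
    rw [hy, hx, hξ, map_add, C.intervalIntegral_comp_comm hint, add_comm]
  have hy_meas : AEStronglyMeasurable y (volume.restrict (Ioc 0 t_f)) :=
    (((hξ_cont.add (C.continuous.comp_continuousOn (hScont x₀))).mono
      Ioc_subset_Icc_self).aestronglyMeasurable measurableSet_Ioc).congr
      ((ae_restrict_mem measurableSet_Ioc).mono fun t ht => (hy_eq t (Ioc_subset_Icc_self ht)).symm)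
  have hobs : Integrable (fun s => ContinuousLinearMap.adjoint (C.comp (S s)) (u s))
      (volume.restrict (Ioc 0 t_f)) :=
    integrable_adjoint_apply measurableSet_Ioc (IsSeparable.of_separableSpace _)
      (fun x => (C.continuous.comp_continuousOn (hScont x)).mono Ioc_subset_Icc_self)
      (fun s hs => (C.opNorm_comp_le _).trans
        (mul_le_mul_of_nonneg_left (hSbound s (Ioc_subset_Icc_self hs)) (norm_nonneg C)))
      (hu.integrable one_le_two)
  have hα : ∫ t in Ioc 0 t_f, ⟪u t, yδ t - ξ t⟫ =
      ∫ t in Ioc 0 t_f, ⟪u t, (yδ t - y t) + C.comp (S t) x₀⟫ :=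
    setIntegral_congr_fun measurableSet_Ioc fun t ht => by
      rw [hy_eq t (Ioc_subset_Icc_self ht), ContinuousLinearMap.comp_apply]; congr 1; abel
  have hμ : (volume.restrict (Ioc (0:ℝ) t_f)).real univ = t_f := by
    rw [measureReal_restrict_apply_univ, Real.volume_real_Ioc_of_le ht_f.le, sub_zero]
  have hbound := abs_inner_sub_integral_inner_le (x₀ := x₀) (w := fun t => yδ t - y t) hu hobs
    (hyδmem.1.sub hy_meas) hδ hnoise
    (by simpa only [ContinuousLinearMap.adjoint_comp, ContinuousLinearMap.comp_apply] using hctrl)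
  rwa [hμ, ← hα] at hbound

/-- Error bound for a single reconstructed Fourier coefficient: if `‖𝓛u - φ‖ ≤ ε` and the
noisy data satisfies `‖y^δ(t) - y(t)‖ ≤ δ` a.e., then the approximate coefficient
`α^δ = ∫₀^{t_f} ⟨u(t), y^δ(t) - ξ(t)⟩ dt` satisfies
`|⟨x₀, φ⟩ - α^δ| ≤ ε ‖x₀‖ + δ √t_f ‖u‖_{L²}`. -/
theorem single_coefficient_error_bound
    {X Y : Type*} [NormedAddCommGroup X] [InnerProductSpace ℝ X] [CompleteSpace X]
    [NormedAddCommGroup Y] [InnerProductSpace ℝ Y] [CompleteSpace Y]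
    (t_f : ℝ) (ht_f : 0 < t_f)
    (S : ℝ → X →L[ℝ] X) (M : ℝ)
    (hS0 : S 0 = ContinuousLinearMap.id ℝ X)
    (hSadd : ∀ s t : ℝ, s ∈ Set.Icc 0 t_f → t ∈ Set.Icc 0 t_f → s + t ∈ Set.Icc 0 t_f →
      S (s + t) = (S s).comp (S t))
    (hScont : ∀ x : X, ContinuousOn (fun t => S t x) (Set.Icc 0 t_f))
    (hSbound : ∀ t ∈ Set.Icc 0 t_f, ‖S t‖ ≤ M)
    (C : X →L[ℝ] Y)
    (f : ℝ → X) (hf : ContinuousOn f (Set.Icc 0 t_f))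
    (x₀ : X)
    (x : ℝ → X) (hx : ∀ t, x t = S t x₀ + ∫ s in (0:ℝ)..t, S (t - s) (f s))
    (y : ℝ → Y) (hy : ∀ t, y t = C (x t))
    (ξ : ℝ → Y) (hξ : ∀ t, ξ t = ∫ s in (0:ℝ)..t, C (S (t - s) (f s)))
    (δ : ℝ) (hδ : 0 ≤ δ)
    (yδ : ℝ → Y) (hyδmem : MemLp yδ 2 (volume.restrict (Set.Ioc (0:ℝ) t_f)))
    (hnoise : ∀ᵐ t ∂(volume.restrict (Set.Ioc (0:ℝ) t_f)), ‖yδ t - y t‖ ≤ δ)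
    (u : ℝ → Y) (hu : MemLp u 2 (volume.restrict (Set.Ioc (0:ℝ) t_f)))
    (φ : X) (ε : ℝ)
    (hctrl : ‖(∫ s in Set.Ioc (0:ℝ) t_f,
        (ContinuousLinearMap.adjoint (S s)) ((ContinuousLinearMap.adjoint C) (u s))) - φ‖ ≤ ε) :
    |⟪x₀, φ⟫ - ∫ t in Set.Ioc (0:ℝ) t_f, ⟪u t, yδ t - ξ t⟫| ≤
      ε * ‖x₀‖ +
        δ * Real.sqrt t_f * Real.sqrt (∫ t in Set.Ioc (0:ℝ) t_f, ‖u t‖ ^ 2) :=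
  single_coefficient_error_bound_general t_f ht_f S M hScont hSbound C f hf x₀ x hx y hy ξ hξ δ hδ
    yδ hyδmem hnoise u hu φ ε hctrl
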